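/- arXiv:1507.02890 — 7 statements merged into one kernel-verified Lean document; each statement's English description precedes it below -/
import Mathlib

section
/- A finite poset is series-parallel (i.e., obtained from singletons by finitely many sequential and parallel products) if and only if it is N-free, i.e., it contains no four elements x1, x2, x3, x4 whose induced order relations are exactly x1 < x2, x3 < x2, x3 < x4. -/
/-- A finite poset. -/
structure FinPoset where
  carrier : Type
  [fin : Fintype carrier]
  [po : PartialOrder carrier]

attribute [instance] FinPoset.fin FinPoset.po

/-- Order isomorphism of finite posets. -/
def FinPoset.Iso (P Q : FinPoset) : Prop :=
  ∃ e : P.carrier ≃ Q.carrier, ∀ x y : P.carrier, x < y ↔ e x < e y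

/-- Parallel product: disjoint union with no new comparabilities. -/
def FinPoset.par (P Q : FinPoset) : FinPoset where
  carrier := P.carrier ⊕ Q.carrier

/-- Sequential product: disjoint union with all of `P` below all of `Q`. -/
def FinPoset.seq (P Q : FinPoset) : FinPoset where
  carrier := P.carrier ⊕ₗ Q.carrier
  fin := inferInstanceAs (Fintype (P.carrier ⊕ Q.carrier))

/-- The class of series-parallel finite posets: the smallest class (closed under
isomorphism) containing the empty poset and the one-element posets, and closed
under sequential and parallel products. -/
inductive IsSP : FinPoset → Prop where
  | empty (P : FinPoset) : IsEmpty P.carrier → IsSP P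
  | single (P : FinPoset) : Nonempty P.carrier → Subsingleton P.carrier → IsSP P
  | seq {P Q : FinPoset} : IsSP P → IsSP Q → IsSP (P.seq Q)
  | par {P Q : FinPoset} : IsSP P → IsSP Q → IsSP (P.par Q)
  | iso {P Q : FinPoset} : IsSP P → P.Iso Q → IsSP Q

/-- A poset is N-free if it contains no four elements whose induced order
relations are exactly `x1 < x2`, `x3 < x2`, `x3 < x4`. -/
def FinPoset.NFree (P : FinPoset) : Prop :=
  ¬ ∃ x1 x2 x3 x4 : P.carrier,
      x1 < x2 ∧ x3 < x2 ∧ x3 < x4 ∧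
      x1 ≠ x3 ∧ x1 ≠ x4 ∧ x2 ≠ x4 ∧
      ¬ (x1 < x3 ∨ x3 < x1) ∧ ¬ (x1 < x4 ∨ x4 < x1) ∧ ¬ (x2 < x4 ∨ x4 < x2)

/-
A finite N-free poset with at least two elements is cut into two nonempty induced subposets
that form a sequential or a parallel product, so induction on the size shows it is
series-parallel. If some element lies strictly above all minimal elements, N-freeness puts
every element that does not below every element that does: a series cut. Otherwise fix a
maximal `u`; two distinct maximal elements sharing a minimal lower bound have the same minimal
lower bounds (else they span an N), so the elements all of whose minimal lower bounds lie
below `u` are incomparable with the rest: a parallel cut. Conversely, an N cannot straddle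
the two factors of a sequential or parallel product, since both its comparability and its
incomparability graph are connected.
-/

variable {α β : Type*}

def IsNFree (α : Type*) [Preorder α] : Prop :=
  ∀ ⦃a b c d : α⦄, a < b → c < b → c < d →
    IncompRel (· ≤ ·) a c → IncompRel (· ≤ ·) a d → IncompRel (· ≤ ·) b d → False

def IsSeriesCut [LT α] (A : Set α) : Prop :=
  ∀ x ∈ A, ∀ y ∉ A, x < y

def IsParallelCut [LE α] (A : Set α) : Prop :=
  ∀ x ∈ A, ∀ y ∉ A, IncompRel (· ≤ ·) x y

section Preorder
variable [Preorder α] [Preorder β]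

theorem exists_isMin_le [WellFoundedLT α] (x : α) : ∃ m ≤ x, IsMin m := by
  simpa using exists_minimal_le_of_wellFoundedLT (fun _ => True) x trivial

theorem exists_isMax_ge [WellFoundedGT α] (x : α) : ∃ u ≥ x, IsMax u := by
  simpa using exists_maximal_ge_of_wellFoundedGT (fun _ => True) x trivial

theorem IsNFree.of_subsingleton [Subsingleton α] : IsNFree α :=
  fun a b _ _ hab _ _ _ _ _ => hab.ne (Subsingleton.elim a b)

theorem IsNFree.of_orderEmbedding (f : α ↪o β) (h : IsNFree β) : IsNFree α := by
  intro a b c d hab hcb hcd hac had hbd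
  exact h (f.lt_iff_lt.2 hab) (f.lt_iff_lt.2 hcb) (f.lt_iff_lt.2 hcd)
    (by simpa [IncompRel] using hac) (by simpa [IncompRel] using had)
    (by simpa [IncompRel] using hbd)

theorem IsNFree.sum (hα : IsNFree α) (hβ : IsNFree β) : IsNFree (α ⊕ β) := by
  rintro (a | a) (b | b) (c | c) (d | d) hab hcb hcd hac had hbd <;>
    simp only [IncompRel, Sum.inl_le_inl_iff, Sum.inr_le_inr_iff, Sum.inl_lt_inl_iff,
      Sum.inr_lt_inr_iff, Sum.not_inl_lt_inr, Sum.not_inr_lt_inl] at * <;>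
    first | exact hα hab hcb hcd hac had hbd | exact hβ hab hcb hcd hac had hbd

theorem IsNFree.sum_lex (hα : IsNFree α) (hβ : IsNFree β) : IsNFree (α ⊕ₗ β) := by
  intro a b c d
  obtain ⟨a | a, rfl⟩ := toLex.surjective a <;> obtain ⟨b | b, rfl⟩ := toLex.surjective b <;>
    obtain ⟨c | c, rfl⟩ := toLex.surjective c <;> obtain ⟨d | d, rfl⟩ := toLex.surjective d <;>
    intro hab hcb hcd hac had hbd <;>
    simp only [IncompRel, Sum.Lex.inl_le_inl_iff, Sum.Lex.inr_le_inr_iff,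
      Sum.Lex.inl_lt_inl_iff, Sum.Lex.inr_lt_inr_iff, Sum.Lex.inl_le_inr, Sum.Lex.inl_lt_inr,
      Sum.Lex.not_inr_le_inl, Sum.Lex.not_inr_lt_inl, not_true_eq_false, false_and,
      and_false] at * <;>
    first | exact hα hab hcb hcd hac had hbd | exact hβ hab hcb hcd hac had hbd

end Preorder

section PartialOrder
variable [PartialOrder α]

theorem incompRel_le_iff {a b : α} :
    IncompRel (· ≤ ·) a b ↔ a ≠ b ∧ ¬(a < b ∨ b < a) := by
  simp only [IncompRel, le_iff_lt_or_eq, ne_eq, not_or, eq_comm (a := b)]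
  tauto

theorem IsMin.incompRel {m m' : α} (hm : IsMin m) (hm' : IsMin m') (hne : m ≠ m') :
    IncompRel (· ≤ ·) m m' :=
  ⟨fun h => hne (hm'.eq_of_le h), fun h => hne (hm.eq_of_ge h)⟩

theorem IsMax.incompRel {u u' : α} (hu : IsMax u) (hu' : IsMax u') (hne : u ≠ u') :
    IncompRel (· ≤ ·) u u' :=
  ⟨fun h => hne (hu.eq_of_le h), fun h => hne (hu'.eq_of_ge h)⟩

theorem IsNFree.lt_of_forall_isMin_lt [WellFoundedLT α] (hN : IsNFree α) {x y : α}
    (hx : ∃ m, IsMin m ∧ ¬ m < x) (hy : ∀ m, IsMin m → m < y) : x < y := by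
  obtain ⟨m', hm', hm'x⟩ := hx
  obtain ⟨m, hmx, hm⟩ := exists_isMin_le x
  obtain rfl | hmx := hmx.eq_or_lt
  · exact hy m hm
  by_contra hxy
  refine hN (hy m' hm') (hy m hm) hmx (hm'.incompRel hm ?_) ⟨?_, ?_⟩ ⟨?_, ?_⟩
  · rintro rfl; exact hm'x hmx
  · exact fun h => hm'x (h.lt_of_ne (by rintro rfl; exact hm'.not_lt hmx))
  · exact fun h => hm'.not_lt (hmx.trans_le h)
  · exact fun h => hm'x ((hy m' hm').trans_le h)
  · exact fun h => hxy (h.lt_of_ne (by rintro rfl; exact hm'x (hy m' hm')))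

theorem IsNFree.le_of_isMin_le (hN : IsNFree α) {x y m₀ m₁ : α} (hxy : IncompRel (· ≤ ·) x y)
    (hm₀ : IsMin m₀) (hm₁ : IsMin m₁) (h₀x : m₀ ≤ x) (h₀y : m₀ ≤ y) (h₁x : m₁ ≤ x) :
    m₁ ≤ y := by
  by_contra h₁y
  have hne : m₁ ≠ m₀ := by rintro rfl; exact h₁y h₀y
  refine hN (h₁x.lt_of_ne ?_) (h₀x.lt_of_ne ?_) (h₀y.lt_of_ne ?_) (hm₁.incompRel hm₀ hne)
    ⟨h₁y, fun h => h₁y (hm₁.eq_of_le h ▸ le_rfl)⟩ hxy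
  · rintro rfl; exact hne (hm₁.eq_of_le h₀x).symm
  · rintro rfl; exact hxy.not_le h₀y
  · rintro rfl; exact hxy.not_ge h₀x

theorem IsNFree.isSeriesCut [WellFoundedLT α] (hN : IsNFree α) :
    IsSeriesCut {x : α | ∃ m, IsMin m ∧ ¬ m < x} := by
  intro x hx y hy
  exact hN.lt_of_forall_isMin_lt hx (by simpa using hy)

theorem IsNFree.isParallelCut [WellFoundedLT α] [WellFoundedGT α] (hN : IsNFree α) {u : α}
    (hu : IsMax u) : IsParallelCut {x : α | ∀ m, IsMin m → m ≤ x → m ≤ u} := by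
  intro x hx y hy
  refine ⟨fun hxy => ?_, fun hyx => hy fun m hm hmy => hx m hm (hmy.trans hyx)⟩
  obtain ⟨m₁, hm₁, h₁y, h₁u⟩ : ∃ m, IsMin m ∧ m ≤ y ∧ ¬ m ≤ u := by simpa using hy
  obtain ⟨w, hyw, hw⟩ := exists_isMax_ge y
  obtain ⟨m₀, h₀x, hm₀⟩ := exists_isMin_le x
  have hwu : w ≠ u := by rintro rfl; exact h₁u (h₁y.trans hyw)
  exact h₁u (hN.le_of_isMin_le (hw.incompRel hu hwu) hm₀ hm₁ (h₀x.trans (hxy.trans hyw))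
    (hx m₀ hm₀ h₀x) (h₁y.trans hyw))

theorem IsNFree.exists_cut [WellFoundedLT α] [WellFoundedGT α] [Nontrivial α]
    (hN : IsNFree α) :
    ∃ A : Set α, A.Nonempty ∧ Aᶜ.Nonempty ∧ (IsSeriesCut A ∨ IsParallelCut A) := by
  by_cases hB : ∃ y : α, ∀ m, IsMin m → m < y
  · obtain ⟨y, hy⟩ := hB
    obtain ⟨m, -, hm⟩ := exists_isMin_le y
    exact ⟨{x | ∃ m, IsMin m ∧ ¬ m < x}, ⟨m, m, hm, lt_irrefl m⟩, ⟨y, by simpa using hy⟩,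
      .inl hN.isSeriesCut⟩
  push Not at hB
  obtain ⟨u, -, hu⟩ := exists_isMax_ge (Classical.arbitrary α)
  obtain ⟨m, hm, hmu⟩ := hB u
  obtain rfl | hne := eq_or_ne m u
  · obtain ⟨z, hz⟩ := exists_ne m
    refine ⟨{m}, Set.singleton_nonempty m, ⟨z, hz⟩, .inr ?_⟩
    rintro x rfl y hy
    exact ⟨fun h => hy (hu.eq_of_le h).symm, fun h => hy (hm.eq_of_le h)⟩
  · refine ⟨_, ⟨u, fun _ _ h => h⟩, ⟨m, fun h => hmu ((h m hm le_rfl).lt_of_ne hne)⟩,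
      .inr (hN.isParallelCut hu)⟩

end PartialOrder

namespace FinPoset

theorem nFree_iff_isNFree (P : FinPoset) : P.NFree ↔ IsNFree P.carrier := by
  simp only [NFree, IsNFree, incompRel_le_iff, not_exists]
  constructor
  · rintro h a b c d hab hcb hcd ⟨hac, hac'⟩ ⟨had, had'⟩ ⟨hbd, hbd'⟩
    exact h a b c d ⟨hab, hcb, hcd, hac, had, hbd, hac', had', hbd'⟩
  · rintro h a b c d ⟨hab, hcb, hcd, hac, had, hbd, hac', had', hbd'⟩
    exact h hab hcb hcd ⟨hac, hac'⟩ ⟨had, had'⟩ ⟨hbd, hbd'⟩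

theorem Iso.isNFree {P Q : FinPoset} (h : P.Iso Q) (hP : IsNFree P.carrier) :
    IsNFree Q.carrier := by
  obtain ⟨e, he⟩ := h
  let f : P.carrier ≃o Q.carrier :=
    { toEquiv := e
      map_rel_iff' := fun {a b} => by simp only [le_iff_lt_or_eq, he, e.apply_eq_iff_eq] }
  exact hP.of_orderEmbedding f.symm.toOrderEmbedding

noncomputable def restrict (P : FinPoset) (A : Set P.carrier) : FinPoset where
  carrier := A
  fin := Fintype.ofFinite A

theorem iso_seq_restrict (P : FinPoset) {A : Set P.carrier} (hA : IsSeriesCut A) :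
    ((P.restrict A).seq (P.restrict Aᶜ)).Iso P := by
  classical
  refine ⟨toLex.symm.trans (Equiv.Set.sumCompl A), fun x y => ?_⟩
  obtain ⟨a | a, rfl⟩ := toLex.surjective x <;> obtain ⟨b | b, rfl⟩ := toLex.surjective y
  · exact Sum.Lex.inl_lt_inl_iff.trans Subtype.coe_lt_coe.symm
  · exact iff_of_true (Sum.Lex.inl_lt_inr a b) (hA a.1 a.2 b.1 b.2)
  · exact iff_of_false Sum.Lex.not_inr_lt_inl (hA b.1 b.2 a.1 a.2).not_gt
  · exact Sum.Lex.inr_lt_inr_iff.trans Subtype.coe_lt_coe.symm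

theorem iso_par_restrict (P : FinPoset) {A : Set P.carrier} (hA : IsParallelCut A) :
    ((P.restrict A).par (P.restrict Aᶜ)).Iso P := by
  classical
  refine ⟨Equiv.Set.sumCompl A, ?_⟩
  rintro (a | a) (b | b)
  · exact Sum.inl_lt_inl_iff.trans Subtype.coe_lt_coe.symm
  · exact iff_of_false Sum.not_inl_lt_inr (hA a.1 a.2 b.1 b.2).not_lt
  · exact iff_of_false Sum.not_inr_lt_inl (hA b.1 b.2 a.1 a.2).not_gt
  · exact Sum.inr_lt_inr_iff.trans Subtype.coe_lt_coe.symm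

end FinPoset

namespace IsSP

theorem of_subsingleton (P : FinPoset) [Subsingleton P.carrier] : IsSP P :=
  (isEmpty_or_nonempty P.carrier).elim (empty P) (fun h => single P h ‹_›)

theorem isNFree {P : FinPoset} (h : IsSP P) : IsNFree P.carrier := by
  induction h with
  | empty _ _ => exact .of_subsingleton
  | single _ _ _ => exact .of_subsingleton
  | seq _ _ ihP ihQ => exact ihP.sum_lex ihQ
  | par _ _ ihP ihQ => exact ihP.sum ihQ
  | iso _ hPQ ih => exact hPQ.isNFree ih

theorem of_isNFree (P : FinPoset) (hP : IsNFree P.carrier) : IsSP P := by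
  induction hn : Nat.card P.carrier using Nat.strong_induction_on generalizing P with
  | _ n ih =>
  rcases subsingleton_or_nontrivial P.carrier with _ | _
  · exact of_subsingleton P
  obtain ⟨A, ⟨a, ha⟩, ⟨b, hb⟩, hcut⟩ := hP.exists_cut
  have hA : IsSP (P.restrict A) :=
    ih _ (hn ▸ Finite.card_subtype_lt hb) _ (hP.of_orderEmbedding (OrderEmbedding.subtype _)) rfl
  have hAc : IsSP (P.restrict Aᶜ) :=
    ih _ (hn ▸ Finite.card_subtype_lt (not_not_intro ha)) _
      (hP.of_orderEmbedding (OrderEmbedding.subtype _)) rfl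
  rcases hcut with h | h
  · exact (hA.seq hAc).iso (P.iso_seq_restrict h)
  · exact (hA.par hAc).iso (P.iso_par_restrict h)

end IsSP

theorem seriesParallel_iff_nfree (P : FinPoset) : IsSP P ↔ P.NFree := by
  rw [P.nFree_iff_isNFree]
  exact ⟨IsSP.isNFree, IsSP.of_isNFree P⟩
end

section
/- In a finite N-free poset P, let a, b, c, d ∈ P be such that a is a predecessor of b, c is a predecessor of d, a < d, and c < b. Then a is a predecessor of d and c is a predecessor of b. -/
/-- A partial order is N-free if it contains no four elements whose induced order
relations are exactly `x1 < x2`, `x3 < x2`, `x3 < x4`. -/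
def NFree (α : Type*) [PartialOrder α] : Prop :=
  ¬ ∃ x1 x2 x3 x4 : α,
      x1 < x2 ∧ x3 < x2 ∧ x3 < x4 ∧
      x1 ≠ x3 ∧ x1 ≠ x4 ∧ x2 ≠ x4 ∧
      ¬ (x1 < x3 ∨ x3 < x1) ∧ ¬ (x1 < x4 ∨ x4 < x1) ∧ ¬ (x2 < x4 ∨ x4 < x2)

/-! If `z` lay strictly between `a` and `d`, then `z < d > c < b` would be an induced `N`:
each missing comparability would put an element strictly inside one of the covers
`a ⋖ b`, `c ⋖ d`. The second half of the conclusion is the first with the two covers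
exchanged. -/

section NFree

variable {α : Type*} [PartialOrder α]

theorem NFree.not_incompRel_of_lt (hN : NFree α) {x1 x2 x3 x4 : α}
    (h12 : x1 < x2) (h32 : x3 < x2) (h34 : x3 < x4)
    (h13 : IncompRel (· ≤ ·) x1 x3) (h14 : IncompRel (· ≤ ·) x1 x4) :
    ¬ IncompRel (· ≤ ·) x2 x4 := fun h24 =>
  hN ⟨x1, x2, x3, x4, h12, h32, h34, h13.ne, h14.ne, h24.ne,
    not_or.2 ⟨h13.not_lt, h13.not_gt⟩, not_or.2 ⟨h14.not_lt, h14.not_gt⟩,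
    not_or.2 ⟨h24.not_lt, h24.not_gt⟩⟩

theorem NFree.covBy_of_covBy_of_lt (hN : NFree α) {a b c d : α}
    (hab : a ⋖ b) (hcd : c ⋖ d) (had : a < d) (hcb : c < b) : a ⋖ d := by
  refine ⟨had, fun z haz hzd => ?_⟩
  have hzc : IncompRel (· ≤ ·) z c := by
    refine ⟨fun hzc => hab.2 (haz.trans_le hzc) hcb, fun hcz => ?_⟩
    rcases hcz.lt_or_eq with hcz | rfl
    · exact hcd.2 hcz hzd
    · exact hab.2 haz hcb
  have hzb : IncompRel (· ≤ ·) z b := by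
    refine ⟨fun hzb => ?_, fun hbz => hcd.2 hcb (hbz.trans_lt hzd)⟩
    rcases hzb.lt_or_eq with hzb | rfl
    · exact hab.2 haz hzb
    · exact hcd.2 hcb hzd
  have hdb : IncompRel (· ≤ ·) d b := by
    refine ⟨fun hdb => ?_, fun hbd => ?_⟩
    · exact hab.2 haz (hzd.trans_le hdb)
    · rcases hbd.lt_or_eq with hbd | rfl
      · exact hcd.2 hcb hbd
      · exact hab.2 haz hzd
  exact hN.not_incompRel_of_lt hzd hcd.lt hcb hzc hzb hdb

end NFree

theorem nfree_pred_exchange_general {α : Type*} [PartialOrder α] (hN : NFree α)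
    (a b c d : α) (hab : a ⋖ b) (hcd : c ⋖ d) (had : a < d) (hcb : c < b) :
    a ⋖ d ∧ c ⋖ b :=
  ⟨hN.covBy_of_covBy_of_lt hab hcd had hcb, hN.covBy_of_covBy_of_lt hcd hab hcb had⟩

/-- In a finite N-free poset, if `a` is a predecessor of `b` (i.e. `a ⋖ b`),
`c` a predecessor of `d`, `a < d` and `c < b`, then `a` is a predecessor of `d`
and `c` a predecessor of `b`. -/
theorem nfree_pred_exchange {α : Type*} [Fintype α] [PartialOrder α] (hN : NFree α)
    (a b c d : α) (hab : a ⋖ b) (hcd : c ⋖ d) (had : a < d) (hcb : c < b) :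
    a ⋖ d ∧ c ⋖ b :=
  nfree_pred_exchange_general hN a b c d hab hcd had hcb
end

section
/- In a finite N-free poset, all predecessors of a given element have the same set of successors; equivalently, if a and a' are both predecessors of some element b, then every successor of a is a successor of a'. -/
section PartialOrder

variable {α : Type*} [PartialOrder α] {a b c : α}

theorem IncompRel.not_lt_or_gt (h : IncompRel (· ≤ ·) a b) : ¬ (a < b ∨ b < a) := by
  rintro (hab | hba)
  exacts [h.not_lt hab, h.not_gt hba]

theorem CovBy.incompRel_of_covBy_of_ne (hac : a ⋖ c) (hbc : b ⋖ c) (hab : a ≠ b) :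
    IncompRel (· ≤ ·) a b :=
  ⟨fun h => hac.2 (h.lt_of_ne hab) hbc.lt, fun h => hbc.2 (h.lt_of_ne hab.symm) hac.lt⟩

theorem CovBy.incompRel_of_covBy_of_ne' (hab : a ⋖ b) (hac : a ⋖ c) (hbc : b ≠ c) :
    IncompRel (· ≤ ·) b c :=
  ⟨fun h => hac.2 hab.lt (h.lt_of_ne hbc), fun h => hab.2 hac.lt (h.lt_of_ne hbc.symm)⟩

theorem NFree.lt_of_incompRel (hN : NFree α) {x₁ x₂ x₃ x₄ : α} (h₁₂ : x₁ < x₂) (h₃₂ : x₃ < x₂)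
    (h₃₄ : x₃ < x₄) (h₁₃ : IncompRel (· ≤ ·) x₁ x₃) (h₂₄ : IncompRel (· ≤ ·) x₂ x₄) :
    x₁ < x₄ := by
  by_contra h₁₄
  have hx₄ : ¬ x₄ ≤ x₁ := fun h => h₂₄.not_gt (h.trans_lt h₁₂)
  refine hN ⟨x₁, x₂, x₃, x₄, h₁₂, h₃₂, h₃₄, h₁₃.ne, ?_, h₂₄.ne, h₁₃.not_lt_or_gt, ?_,
    h₂₄.not_lt_or_gt⟩
  · rintro rfl
    exact hx₄ le_rfl
  · rintro (h | h)
    exacts [h₁₄ h, hx₄ h.le]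

end PartialOrder

theorem nfree_predecessors_same_successors_general {α : Type*} [PartialOrder α]
    (hN : NFree α) (a a' b : α) (hab : a ⋖ b) (ha'b : a' ⋖ b) :
    ∀ s : α, a ⋖ s → a' ⋖ s := by
  intro s has
  rcases eq_or_ne a a' with rfl | haa'
  · exact has
  rcases eq_or_ne b s with rfl | hbs
  · exact ha'b
  have hinc_aa' := hab.incompRel_of_covBy_of_ne ha'b haa'
  have hinc_bs := hab.incompRel_of_covBy_of_ne' has hbs
  refine ⟨hN.lt_of_incompRel ha'b.lt hab.lt has.lt hinc_aa'.symm hinc_bs, fun z ha'z hzs => ?_⟩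
  have hinc_za : IncompRel (· ≤ ·) z a :=
    ⟨fun h => hinc_aa'.not_gt (ha'z.trans_le h),
      fun h => has.2 (h.lt_of_ne fun haz => hinc_aa'.not_gt (haz ▸ ha'z)) hzs⟩
  exact ha'b.2 ha'z (hN.lt_of_incompRel hzs has.lt hab.lt hinc_za hinc_bs.symm)

/-- In a finite N-free poset, all predecessors of a given element have the same
successors: if `a` and `a'` are both predecessors of `b`, then every successor
of `a` is a successor of `a'`. (`x ⋖ y` means `x` is a predecessor of `y`.) -/
theorem nfree_predecessors_same_successors {α : Type*} [Fintype α] [PartialOrder α]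
    (hN : NFree α) (a a' b : α) (hab : a ⋖ b) (ha'b : a' ⋖ b) :
    ∀ s : α, a ⋖ s → a' ⋖ s :=
  nfree_predecessors_same_successors_general hN a a' b hab ha'b
end

section
/- In a finite N-free series-parallel poset P, two distinct good maximal parallel blocks of P cannot have the same set of minimal elements; likewise they cannot have the same set of maximal elements. -/
variable {α : Type*} [PartialOrder α]

/-- Two elements are comparable. -/
def Comp (x y : α) : Prop := x < y ∨ y < x

/-- A block: a nonempty subset closed under intermediate elements. -/
def IsBlock (B : Set α) : Prop :=
  B.Nonempty ∧ ∀ b ∈ B, ∀ b' ∈ B, b < b' → ∀ p, b ≤ p → p ≤ b' → p ∈ B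

/-- A subset `G` of `X` is good (in `X`) if every element of `X` comparable to some
element of `G` and incomparable to another element of `G` belongs to `G`. -/
def IsGoodIn (X G : Set α) : Prop :=
  ∀ p ∈ X, (∃ g ∈ G, Comp p g) → (∃ g' ∈ G, ¬ Comp p g') → p ∈ G

/-- `R` decomposes as a parallel product of two nonempty, elementwise
incomparable (hence disjoint) parts. -/
def IsParallel (R : Set α) : Prop :=
  ∃ P1 P2 : Set α, P1.Nonempty ∧ P2.Nonempty ∧ R = P1 ∪ P2 ∧
    ∀ x ∈ P1, ∀ y ∈ P2, x ≠ y ∧ ¬ Comp x y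

/-- A good maximal parallel block of `X`: a good block of `X` contained in `X`
admitting a nontrivial parallel decomposition, and maximal for parallel
extension: no good block of `X` equals `R ∥ T` with `T` nonempty. -/
def GMPB (X R : Set α) : Prop :=
  R ⊆ X ∧ IsBlock R ∧ IsGoodIn X R ∧ IsParallel R ∧
    ¬ ∃ R' : Set α, R' ⊆ X ∧ IsBlock R' ∧ IsGoodIn X R' ∧
      ∃ T : Set α, T.Nonempty ∧ R' = R ∪ T ∧ ∀ x ∈ R, ∀ y ∈ T, x ≠ y ∧ ¬ Comp x y

/-- The minimal elements of `G`. -/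
def minOf (G : Set α) : Set α := {g ∈ G | ∀ g' ∈ G, ¬ g' < g}

/-- The maximal elements of `G`. -/
def maxOf (G : Set α) : Set α := {g ∈ G | ∀ g' ∈ G, ¬ g < g'}

theorem comp_toDual_iff {x y : α} : Comp (α := αᵒᵈ) x y ↔ Comp x y := or_comm

theorem IsBlock.dual {B : Set α} (h : IsBlock B) : IsBlock (α := αᵒᵈ) B :=
  ⟨h.1, fun b hb b' hb' hlt p hbp hpb' => h.2 b' hb' b hb hlt p hpb' hbp⟩

theorem IsGoodIn.dual {X G : Set α} (h : IsGoodIn X G) : IsGoodIn (α := αᵒᵈ) X G :=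
  fun p hp hc hi => h p hp (hc.imp fun _ hg => ⟨hg.1, comp_toDual_iff.1 hg.2⟩)
    (hi.imp fun _ hg => ⟨hg.1, mt comp_toDual_iff.2 hg.2⟩)

theorem IsParallel.dual {R : Set α} (h : IsParallel R) : IsParallel (α := αᵒᵈ) R := by
  obtain ⟨P₁, P₂, h₁, h₂, hU, hinc⟩ := h
  exact ⟨P₁, P₂, h₁, h₂, hU, fun x hx y hy =>
    ⟨(hinc x hx y hy).1, mt (comp_toDual_iff (α := α)).1 (hinc x hx y hy).2⟩⟩

theorem mem_minOf_iff {S : Set α} {x : α} : x ∈ minOf S ↔ Minimal (· ∈ S) x := by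
  rw [minimal_iff_forall_lt]
  exact and_congr_right fun _ => ⟨fun h y hyx hy => h y hy hyx, fun h y hy hyx => h hyx hy⟩

theorem exists_mem_minOf_le [WellFoundedLT α] {S : Set α} {x : α} (hx : x ∈ S) :
    ∃ m ∈ minOf S, m ≤ x := by
  obtain ⟨m, hmx, hm⟩ := exists_minimal_le_of_wellFoundedLT (· ∈ S) x hx
  exact ⟨m, mem_minOf_iff.2 hm, hmx⟩

theorem lt_of_mem_diff_of_minOf_eq [WellFoundedLT α] {R R' : Set α} (hB : IsBlock R)
    (hG : IsGoodIn Set.univ R) (hmin : minOf R = minOf R') {x r : α} (hx : x ∈ R' \ R)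
    (hr : r ∈ R) : r < x := by
  obtain ⟨m, hm, hmx⟩ := exists_mem_minOf_le hx.1
  have hmR : m ∈ R := (hmin ▸ hm).1
  have hmx : m < x := hmx.lt_of_ne fun h => hx.2 (h ▸ hmR)
  have hcomp : Comp x r := by
    by_contra hxr
    exact hx.2 (hG x trivial ⟨m, hmR, Or.inr hmx⟩ ⟨r, hr, hxr⟩)
  refine hcomp.resolve_left fun hxr => hx.2 ?_
  exact hB.2 m hmR r hr (hmx.trans hxr) x hmx.le hxr.le

theorem IsParallel.eq_of_subset_of_forall_lt {S S' : Set α} (hP : IsParallel S')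
    (hS : S.Nonempty) (hsub : S ⊆ S') (hlt : ∀ x ∈ S' \ S, ∀ r ∈ S, r < x) : S = S' := by
  obtain ⟨Q₁, Q₂, hQ₁, hQ₂, rfl, hinc⟩ := hP
  obtain ⟨r, hr⟩ := hS
  wlog hr₁ : r ∈ Q₁ generalizing Q₁ Q₂
  · rw [Set.union_comm] at hsub hlt ⊢
    refine this Q₂ Q₁ hQ₂ hQ₁ (fun x hx y hy => ?_) hsub hlt ?_
    · exact ⟨(hinc y hy x hx).1.symm, fun h => (hinc y hy x hx).2 h.symm⟩
    · exact (hsub hr).resolve_right hr₁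
  have hQ₂S : Q₂ ⊆ S := fun q hq => by
    by_contra hqS
    exact (hinc r hr₁ q hq).2 (Or.inl (hlt q ⟨Or.inr hq, hqS⟩ r hr))
  refine hsub.antisymm fun t ht => ?_
  by_contra htS
  obtain ⟨q, hq⟩ := hQ₂
  have ht₁ : t ∈ Q₁ := ht.resolve_right fun ht₂ => htS (hQ₂S ht₂)
  exact (hinc t ht₁ q hq).2 (Or.inr (hlt t ⟨ht, htS⟩ q (hQ₂S hq)))

theorem eq_of_minOf_eq [WellFoundedLT α] {R R' : Set α} (hB : IsBlock R)
    (hG : IsGoodIn Set.univ R) (hP : IsParallel R) (hB' : IsBlock R')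
    (hG' : IsGoodIn Set.univ R') (hP' : IsParallel R') (hmin : minOf R = minOf R') :
    R = R' := by
  have hlt : ∀ x ∈ R' \ R, ∀ r ∈ R, r < x := fun _ hx _ hr =>
    lt_of_mem_diff_of_minOf_eq hB hG hmin hx hr
  have hlt' : ∀ x ∈ R \ R', ∀ r ∈ R', r < x := fun _ hx _ hr =>
    lt_of_mem_diff_of_minOf_eq hB' hG' hmin.symm hx hr
  have hsub : R ⊆ R' ∨ R' ⊆ R := by
    by_contra! h
    obtain ⟨⟨y, hyR, hyR'⟩, ⟨x, hxR', hxR⟩⟩ := And.imp Set.not_subset.1 Set.not_subset.1 h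
    exact (hlt x ⟨hxR', hxR⟩ y hyR).asymm (hlt' y ⟨hyR, hyR'⟩ x hxR')
  rcases hsub with h | h
  · exact hP'.eq_of_subset_of_forall_lt hB.1 h hlt
  · exact (hP.eq_of_subset_of_forall_lt hB'.1 h hlt').symm

theorem eq_of_maxOf_eq [WellFoundedGT α] {R R' : Set α} (hB : IsBlock R)
    (hG : IsGoodIn Set.univ R) (hP : IsParallel R) (hB' : IsBlock R')
    (hG' : IsGoodIn Set.univ R') (hP' : IsParallel R') (hmax : maxOf R = maxOf R') :
    R = R' :=
  eq_of_minOf_eq (α := αᵒᵈ) hB.dual hG.dual hP.dual hB'.dual hG'.dual hP'.dual hmax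

theorem gmpb_min_max_determine_general {α : Type*} [Fintype α] [PartialOrder α]
    (R R' : Set α) (hR : GMPB Set.univ R) (hR' : GMPB Set.univ R') (hne : R ≠ R') :
    minOf R ≠ minOf R' ∧ maxOf R ≠ maxOf R' := by
  obtain ⟨-, hB, hG, hP, -⟩ := hR
  obtain ⟨-, hB', hG', hP', -⟩ := hR'
  exact ⟨fun h => hne (eq_of_minOf_eq hB hG hP hB' hG' hP' h),
    fun h => hne (eq_of_maxOf_eq hB hG hP hB' hG' hP' h)⟩

/-- In a finite N-free poset `P`, two distinct good maximal parallel blocks of `P`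
cannot have the same set of minimal elements, nor the same set of maximal elements. -/
theorem gmpb_min_max_determine {α : Type*} [Fintype α] [PartialOrder α] (hN : NFree α)
    (R R' : Set α) (hR : GMPB Set.univ R) (hR' : GMPB Set.univ R') (hne : R ≠ R') :
    minOf R ≠ minOf R' ∧ maxOf R ≠ maxOf R' :=
  gmpb_min_max_determine_general R R' hR hR' hne
end

section
/- Every good maximal parallel block G of a finite N-free poset P with G ≠ P has at least one witness. -/
variable {α : Type*} [PartialOrder α]

variable (G : Set α)

/-- The set of elements strictly below all of `G`. -/
def lowerOf : Set α := {p | ∀ g ∈ G, p < g}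

/-- The set of elements strictly above all of `G`. -/
def upperOf : Set α := {p | ∀ g ∈ G, g < p}

/-- A left witness of `G`: a maximal element of `{p : p < G}` whose set of
successors (covers) is exactly the set of minimal elements of `G`. -/
def IsLeftWitness (x : α) : Prop :=
  x ∈ lowerOf G ∧ (∀ y ∈ lowerOf G, ¬ x < y) ∧ {s | x ⋖ s} = minOf G

/-- A right witness of `G`: a minimal element of `{p : G < p}` whose set of
predecessors is exactly the set of maximal elements of `G`. -/
def IsRightWitness (x : α) : Prop :=
  x ∈ upperOf G ∧ (∀ y ∈ upperOf G, ¬ y < x) ∧ {p | p ⋖ x} = maxOf G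

/-- The set of witnesses of `G`. -/
def witnesses : Set α := {x | IsLeftWitness G x} ∪ {x | IsRightWitness G x}

/-- `W⁻(G)`: the predecessors of the minimal elements of `G`. -/
def Wminus : Set α := {x | ∃ m ∈ minOf G, x ⋖ m}

/-- `W⁺(G)`: the successors of the maximal elements of `G`. -/
def Wplus : Set α := {x | ∃ m ∈ maxOf G, m ⋖ x}

/-!
Outside `G` every element lies in `lowerOf G`, in `upperOf G`, or is incomparable to all of `G`:
this is where goodness and convexity of `G` enter. Call an element incomparable to `G`, above all of
`lowerOf G` and below all of `upperOf G` a parallel candidate. The candidates together with `G` form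
a good block, N-freeness being what keeps it good, so by maximality of `G` there is no candidate.

Suppose there is no witness. Then some `s ∉ G` incomparable to `G` lies above all of `lowerOf G`: if
`x` is maximal in `lowerOf G`, a cover of `x` that is not minimal in `G` is such an `s`, by
N-freeness; if `lowerOf G` is empty, any element incomparable to `G` will do, and one exists because
`G ≠ univ` (if it lies in `upperOf G`, a minimal element of `upperOf G` that is not a right witness
covers one). As `s` is no candidate, some `u ∈ upperOf G` is not above `s`; below `u` lies a minimal
`y ∈ upperOf G`, and an element covered by `y` that is not maximal in `G` forms an N with `s`, `y`
and a point of `G`.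
-/

lemma Comp.symm {x y : α} (h : Comp x y) : Comp y x := Or.symm h

variable {G}

theorem mem_lowerOf_or_mem_upperOf_or_incomp (hB : IsBlock G) (hgood : IsGoodIn Set.univ G)
    {p : α} (hp : p ∉ G) : p ∈ lowerOf G ∨ p ∈ upperOf G ∨ ∀ g ∈ G, ¬ Comp p g := by
  by_cases hinc : ∀ g ∈ G, ¬ Comp p g
  · exact Or.inr (Or.inr hinc)
  have hcomp : ∀ g ∈ G, Comp p g := by
    by_contra! h
    push Not at hinc
    exact hp (hgood p trivial hinc h)
  by_cases hbelow : ∃ g ∈ G, g < p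
  · obtain ⟨g, hg, hgp⟩ := hbelow
    refine Or.inr (Or.inl fun g' hg' => (hcomp g' hg').resolve_left fun hpg' => hp ?_)
    exact hB.2 g hg g' hg' (hgp.trans hpg') p hgp.le hpg'.le
  · push Not at hbelow
    exact Or.inl fun g hg => (hcomp g hg).resolve_right (hbelow g hg)

section Witnesses

variable (hB : IsBlock G) (hgood : IsGoodIn Set.univ G)
include hB hgood

theorem covBy_of_mem_minOf {x m : α} (hx : Maximal (· ∈ lowerOf G) x) (hm : m ∈ minOf G) :
    x ⋖ m := by
  refine ⟨hx.prop m hm.1, fun c hxc hcm => ?_⟩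
  by_cases hcG : c ∈ G
  · exact hm.2 c hcG hcm
  rcases mem_lowerOf_or_mem_upperOf_or_incomp hB hgood hcG with hc | hc | hc
  · exact hx.not_gt hc hxc
  · exact (hc m hm.1).asymm hcm
  · exact hc m hm.1 (Or.inl hcm)

theorem covBy_of_mem_maxOf {y m : α} (hy : Minimal (· ∈ upperOf G) y) (hm : m ∈ maxOf G) :
    m ⋖ y := by
  refine ⟨hy.prop m hm.1, fun c hmc hcy => ?_⟩
  by_cases hcG : c ∈ G
  · exact hm.2 c hcG hmc
  rcases mem_lowerOf_or_mem_upperOf_or_incomp hB hgood hcG with hc | hc | hc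
  · exact (hc m hm.1).asymm hmc
  · exact hy.not_lt hc hcy
  · exact hc m hm.1 (Or.inr hmc)

theorem exists_incomp_covBy_of_not_isLeftWitness {x : α} (hx : Maximal (· ∈ lowerOf G) x)
    (hnw : ¬ IsLeftWitness G x) : ∃ s, x ⋖ s ∧ s ∉ G ∧ ∀ g ∈ G, ¬ Comp s g := by
  have hmin : minOf G ⊆ {s | x ⋖ s} := fun m hm => covBy_of_mem_minOf hB hgood hx hm
  obtain ⟨s, hxs, hs⟩ := Set.not_subset.mp fun h =>
    hnw ⟨hx.prop, fun y hy => hx.not_gt hy, h.antisymm hmin⟩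
  have hxs : x ⋖ s := hxs
  have hsG : s ∉ G := fun hsG => hs ⟨hsG, fun g hg hgs => hxs.2 (hx.prop g hg) hgs⟩
  refine ⟨s, hxs, hsG, ?_⟩
  obtain ⟨m, hm⟩ := hB.1
  rcases mem_lowerOf_or_mem_upperOf_or_incomp hB hgood hsG with h | h | h
  · exact absurd hxs.lt (hx.not_gt h)
  · exact absurd (h m hm) (hxs.2 (hx.prop m hm))
  · exact h

theorem exists_incomp_covBy_of_not_isRightWitness {y : α} (hy : Minimal (· ∈ upperOf G) y)
    (hnw : ¬ IsRightWitness G y) : ∃ s, s ⋖ y ∧ s ∉ G ∧ ∀ g ∈ G, ¬ Comp s g := by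
  have hmax : maxOf G ⊆ {s | s ⋖ y} := fun m hm => covBy_of_mem_maxOf hB hgood hy hm
  obtain ⟨s, hsy, hs⟩ := Set.not_subset.mp fun h =>
    hnw ⟨hy.prop, fun z hz => hy.not_lt hz, h.antisymm hmax⟩
  have hsy : s ⋖ y := hsy
  have hsG : s ∉ G := fun hsG => hs ⟨hsG, fun g hg hsg => hsy.2 hsg (hy.prop g hg)⟩
  refine ⟨s, hsy, hsG, ?_⟩
  obtain ⟨m, hm⟩ := hB.1
  rcases mem_lowerOf_or_mem_upperOf_or_incomp hB hgood hsG with h | h | h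
  · exact absurd (hy.prop m hm) (hsy.2 (h m hm))
  · exact absurd hsy.lt (hy.not_lt h)
  · exact h

end Witnesses

section NFree

variable (hN : NFree α) (hG : G.Nonempty)
include hN hG

theorem lt_of_mem_lowerOf_of_maximal_lt {x s l : α} (hx : Maximal (· ∈ lowerOf G) x)
    (hxs : x < s) (hs : ∀ g ∈ G, ¬ Comp s g) (hl : l ∈ lowerOf G) : l < s := by
  obtain ⟨m, hm⟩ := hG
  by_contra hls
  refine hN ⟨l, m, x, s, hl m hm, hx.prop m hm, hxs, ?_, ?_, fun h => hls (h ▸ hl m hm),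
    fun h => h.elim (fun h => hls (h.trans hxs)) (hx.not_gt hl),
    fun h => h.elim hls fun h => hs m hm (Or.inl (h.trans (hl m hm))),
    fun h => hs m hm h.symm⟩
  · rintro rfl
    exact hls hxs
  · rintro rfl
    exact hs m hm (Or.inl (hl m hm))

theorem lt_of_mem_upperOf_of_lt_minimal {y s u : α} (hy : Minimal (· ∈ upperOf G) y)
    (hsy : s < y) (hs : ∀ g ∈ G, ¬ Comp s g) (hu : u ∈ upperOf G) : s < u := by
  obtain ⟨m, hm⟩ := hG
  by_contra hsu
  refine hN ⟨s, y, m, u, hsy, hy.prop m hm, hu m hm, ?_, ?_, ?_, hs m hm,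
    fun h => h.elim hsu fun h => hs m hm (Or.inr ((hu m hm).trans h)),
    fun h => h.elim (fun h => hsu (hsy.trans h)) (hy.not_lt hu)⟩
  · rintro rfl
    exact hsu (hu s hm)
  · rintro rfl
    exact hs m hm (Or.inr (hu m hm))
  · rintro rfl
    exact hsu hsy

theorem lt_of_mem_lowerOf_of_incomp_lt {q r l : α} (hq : ∀ g ∈ G, ¬ Comp q g)
    (hr : ∀ g ∈ G, ¬ Comp r g) (hqr : q < r) (hl : l ∈ lowerOf G) (hlr : l < r) : l < q := by
  obtain ⟨m, hm⟩ := hG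
  by_contra hlq
  refine hN ⟨q, r, l, m, hqr, hlr, hl m hm, ?_, ?_, ?_,
    fun h => h.elim (fun h => hq m hm (Or.inl (h.trans (hl m hm)))) hlq, hq m hm, hr m hm⟩
  · rintro rfl
    exact hq m hm (Or.inl (hl m hm))
  · rintro rfl
    exact hr q hm (Or.inr hqr)
  · rintro rfl
    exact hq r hm (Or.inl hqr)

theorem lt_of_mem_upperOf_of_lt_incomp {r q u : α} (hr : ∀ g ∈ G, ¬ Comp r g)
    (hq : ∀ g ∈ G, ¬ Comp q g) (hrq : r < q) (hu : u ∈ upperOf G) (hru : r < u) : q < u := by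
  obtain ⟨m, hm⟩ := hG
  by_contra hqu
  refine hN ⟨m, u, r, q, hu m hm, hru, hrq, ?_, ?_, ?_, fun h => hr m hm h.symm,
    fun h => hq m hm h.symm, fun h => h.elim (fun h => hq m hm (Or.inr ((hu m hm).trans h))) hqu⟩
  · rintro rfl
    exact hq m hm (Or.inr hrq)
  · rintro rfl
    exact hr m hm (Or.inl hrq)
  · rintro rfl
    exact hq m hm (Or.inr (hu m hm))

theorem lt_or_lt_of_incomp {s s' l y : α} (hs : ∀ g ∈ G, ¬ Comp s g)
    (hs' : ∀ g ∈ G, ¬ Comp s' g) (hl : l ∈ lowerOf G) (hy : y ∈ upperOf G) (hls : l < s)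
    (hs'y : s' < y) : l < s' ∨ s < y := by
  obtain ⟨m, hm⟩ := hG
  by_contra! ⟨hls', hsy⟩
  have hys : ¬ Comp y s := fun h => h.elim (fun h => hs m hm (Or.inr ((hy m hm).trans h))) hsy
  have hy_ne : y ≠ s := by
    rintro rfl
    exact hs m hm (Or.inr (hy m hm))
  by_cases hcomp : Comp s s'
  · rcases hcomp with hss' | hs's
    · exact hsy (hss'.trans hs'y)
    refine hN ⟨m, y, s', s, hy m hm, hs'y, hs's, ?_, ?_, hy_ne, fun h => hs' m hm h.symm,
      fun h => hs m hm h.symm, hys⟩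
    · rintro rfl
      exact hs m hm (Or.inr hs's)
    · rintro rfl
      exact hs' m hm (Or.inl hs's)
  · refine hN ⟨s', y, l, s, hs'y, (hl m hm).trans (hy m hm), hls, ?_, ?_, hy_ne,
      fun h => h.elim (fun h => hs' m hm (Or.inl (h.trans (hl m hm)))) hls', hcomp ∘ Comp.symm,
      hys⟩
    · rintro rfl
      exact hs' m hm (Or.inl (hl m hm))
    · rintro rfl
      exact hls' hls

end NFree

variable (G) in
def parallelCandidates : Set α :=
  {t | t ∉ G ∧ (∀ g ∈ G, ¬ Comp t g) ∧ (∀ l ∈ lowerOf G, l < t) ∧ ∀ u ∈ upperOf G, t < u}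

theorem isBlock_union_parallelCandidates (hB : IsBlock G) (hgood : IsGoodIn Set.univ G) :
    IsBlock (G ∪ parallelCandidates G) := by
  refine ⟨hB.1.mono Set.subset_union_left, ?_⟩
  rintro b (hb | hb) b' (hb' | hb') hbb' p hbp hpb'
  · exact Or.inl (hB.2 b hb b' hb' hbb' p hbp hpb')
  · exact absurd (Or.inr hbb') (hb'.2.1 b hb)
  · exact absurd (Or.inl hbb') (hb.2.1 b' hb')
  rcases hbp.eq_or_lt with rfl | hbp
  · exact Or.inr hb
  rcases hpb'.eq_or_lt with rfl | hpb'
  · exact Or.inr hb'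
  obtain ⟨m, hm⟩ := hB.1
  have hpG : p ∉ G := fun hpG => hb.2.1 p hpG (Or.inl hbp)
  refine Or.inr ⟨hpG, ?_, fun l hl => (hb.2.2.1 l hl).trans hbp,
    fun u hu => hpb'.trans (hb'.2.2.2 u hu)⟩
  rcases mem_lowerOf_or_mem_upperOf_or_incomp hB hgood hpG with h | h | h
  · exact absurd (Or.inl (hbp.trans (h m hm))) (hb.2.1 m hm)
  · exact absurd (Or.inr ((h m hm).trans hpb')) (hb'.2.1 m hm)
  · exact h

theorem isGoodIn_union_parallelCandidates (hN : NFree α) (hB : IsBlock G)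
    (hgood : IsGoodIn Set.univ G) : IsGoodIn Set.univ (G ∪ parallelCandidates G) := by
  rintro q - ⟨r, hr, hqr⟩ ⟨r', hr', hqr'⟩
  by_contra hq
  have hqG : q ∉ G := fun h => hq (Or.inl h)
  rcases mem_lowerOf_or_mem_upperOf_or_incomp hB hgood hqG with h | h | h
  · exact hqr' (Or.inl (hr'.elim (h r') fun ht => ht.2.2.1 q h))
  · exact hqr' (Or.inr (hr'.elim (h r') fun ht => ht.2.2.2 q h))
  have hrT : r ∈ parallelCandidates G := hr.resolve_left fun hrG => h r hrG hqr
  rcases hqr with hqr | hrq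
  · exact hq (Or.inr ⟨hqG, h,
      fun l hl => lt_of_mem_lowerOf_of_incomp_lt hN hB.1 h hrT.2.1 hqr hl (hrT.2.2.1 l hl),
      fun u hu => hqr.trans (hrT.2.2.2 u hu)⟩)
  · exact hq (Or.inr ⟨hqG, h, fun l hl => (hrT.2.2.1 l hl).trans hrq,
      fun u hu => lt_of_mem_upperOf_of_lt_incomp hN hB.1 hrT.2.1 h hrq hu (hrT.2.2.2 u hu)⟩)

theorem notMem_parallelCandidates (hN : NFree α) (hG : GMPB Set.univ G) (t : α) :
    t ∉ parallelCandidates G := fun ht =>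
  hG.2.2.2.2 ⟨_, Set.subset_univ _, isBlock_union_parallelCandidates hG.2.1 hG.2.2.1,
    isGoodIn_union_parallelCandidates hN hG.2.1 hG.2.2.1, _, ⟨t, ht⟩, rfl,
    fun _ hx _ hy => ⟨fun hxy => hy.1 (hxy ▸ hx), fun h => hy.2.1 _ hx h.symm⟩⟩

theorem exists_incomp_of_lowerOf_eq_empty [Finite α] (hB : IsBlock G)
    (hgood : IsGoodIn Set.univ G) (hne : G ≠ Set.univ) (hL : lowerOf G = ∅)
    (hR : ∀ y, ¬ IsRightWitness G y) : ∃ s ∉ G, ∀ g ∈ G, ¬ Comp s g := by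
  obtain ⟨p, hp⟩ := (Set.ne_univ_iff_exists_notMem G).mp hne
  rcases mem_lowerOf_or_mem_upperOf_or_incomp hB hgood hp with h | h | h
  · exact absurd h (hL ▸ Set.notMem_empty p)
  · obtain ⟨y, -, hy⟩ := Finite.exists_le_minimal (p := (· ∈ upperOf G)) h
    obtain ⟨s, -, hsG, hs⟩ := exists_incomp_covBy_of_not_isRightWitness hB hgood hy (hR y)
    exact ⟨s, hsG, hs⟩
  · exact ⟨p, hp, h⟩

theorem exists_isRightWitness_of_incomp [Finite α] (hN : NFree α) (hG : GMPB Set.univ G)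
    {s : α} (hsG : s ∉ G) (hs : ∀ g ∈ G, ¬ Comp s g) (hls : ∀ l ∈ lowerOf G, l < s) :
    ∃ y, IsRightWitness G y := by
  obtain ⟨u, hu, hsu⟩ : ∃ u ∈ upperOf G, ¬ s < u := by
    by_contra! h
    exact notMem_parallelCandidates hN hG s ⟨hsG, hs, hls, h⟩
  obtain ⟨y, hyu, hy⟩ := Finite.exists_le_minimal (p := (· ∈ upperOf G)) hu
  by_contra! hR
  obtain ⟨s', hs'y, hs'G, hs'⟩ :=
    exists_incomp_covBy_of_not_isRightWitness hG.2.1 hG.2.2.1 hy (hR y)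
  obtain ⟨l, hl, hls'⟩ : ∃ l ∈ lowerOf G, ¬ l < s' := by
    by_contra! h
    exact notMem_parallelCandidates hN hG s' ⟨hs'G, hs', h,
      fun u hu => lt_of_mem_upperOf_of_lt_minimal hN hG.2.1.1 hy hs'y.lt hs' hu⟩
  rcases lt_or_lt_of_incomp hN hG.2.1.1 hs hs' hl hy.prop (hls l hl) hs'y.lt with h | h
  · exact hls' h
  · exact hsu (h.trans_le hyu)

/-- Every good maximal parallel block `G` of a finite N-free poset `P` with `G ≠ P`
has at least one witness. -/
theorem gmpb_has_witness {α : Type*} [Fintype α] [PartialOrder α]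
    (hN : NFree α) (G : Set α) (hG : GMPB Set.univ G) (hne : G ≠ Set.univ) :
    ∃ x : α, x ∈ witnesses G := by
  have hB : IsBlock G := hG.2.1
  have hgood : IsGoodIn Set.univ G := hG.2.2.1
  by_contra! hw
  obtain ⟨s, hsG, hs, hls⟩ : ∃ s ∉ G, (∀ g ∈ G, ¬ Comp s g) ∧ ∀ l ∈ lowerOf G, l < s := by
    rcases (lowerOf G).eq_empty_or_nonempty with hL | ⟨x₀, hx₀⟩
    · obtain ⟨s, hsG, hs⟩ :=
        exists_incomp_of_lowerOf_eq_empty hB hgood hne hL fun y hy => hw y (Or.inr hy)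
      exact ⟨s, hsG, hs, by simp [hL]⟩
    · obtain ⟨x, -, hx⟩ := Finite.exists_le_maximal (p := (· ∈ lowerOf G)) hx₀
      obtain ⟨s, hxs, hsG, hs⟩ :=
        exists_incomp_covBy_of_not_isLeftWitness hB hgood hx fun h => hw x (Or.inl h)
      exact ⟨s, hsG, hs, fun l hl => lt_of_mem_lowerOf_of_maximal_lt hN hB.1 hx hxs.lt hs hl⟩
  obtain ⟨y, hy⟩ := exists_isRightWitness_of_incomp hN hG hsG hs hls
  exact hw y (Or.inr hy)
end

section
/- If X and Y are semi-linear subsets of ℕ^n, then the quotient Y / X = { z ∈ ℕ^n : ∃ x ∈ X, z + x ∈ Y } is semi-linear. -/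
/-- A subset of `ℕ^n` is linear if it has the form `a + B*` with `B` finite,
where `B*` is the submonoid generated by `B`. -/
def Linear {n : ℕ} (L : Set (Fin n → ℕ)) : Prop :=
  ∃ (a : Fin n → ℕ) (B : Set (Fin n → ℕ)), B.Finite ∧
    L = (fun b => a + b) '' (AddSubmonoid.closure B : Set (Fin n → ℕ))

/-- A subset of `ℕ^n` is semi-linear if it is a finite union of linear sets. -/
def Semilinear {n : ℕ} (L : Set (Fin n → ℕ)) : Prop :=
  ∃ 𝒮 : Set (Set (Fin n → ℕ)), 𝒮.Finite ∧ (∀ X ∈ 𝒮, Linear X) ∧ L = ⋃₀ 𝒮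

/-!
`Y / X` is the image under `(z, x) ↦ z` of `{(z, x) | x ∈ X} ∩ {(z, x) | z + x ∈ Y}`.
Both sets are preimages of semilinear sets under additive homomorphisms of the finitely
generated monoid `ℕ^n × ℕ^n`, and in a finitely generated commutative monoid semilinear sets
are closed under preimages by homomorphisms, finite intersections and images.
-/

theorem IsSemilinearSet.setOf_exists_add_mem {M : Type*} [AddCommMonoid M] [AddMonoid.FG M]
    {s t : Set M} (hs : IsSemilinearSet s) (ht : IsSemilinearSet t) :
    IsSemilinearSet {z | ∃ x ∈ s, z + x ∈ t} := by
  have hpairs : IsSemilinearSet (AddMonoidHom.snd M M ⁻¹' s ∩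
      (AddMonoidHom.fst M M + AddMonoidHom.snd M M) ⁻¹' t) :=
    (hs.preimage _).inter (ht.preimage _)
  convert hpairs.image (AddMonoidHom.fst M M) using 1
  ext z
  simp

-- `a +ᵥ s` unfolds to the image of `s` under `(a + ·)`.
theorem semilinear_iff_isSemilinearSet {n : ℕ} {L : Set (Fin n → ℕ)} :
    Semilinear L ↔ IsSemilinearSet L :=
  Iff.rfl

/-- The quotient `Y / X = { z : ∃ x ∈ X, z + x ∈ Y }` of semi-linear subsets of
`ℕ^n` is semi-linear. -/
theorem semilinear_quotient {n : ℕ} (X Y : Set (Fin n → ℕ))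
    (hX : Semilinear X) (hY : Semilinear Y) :
    Semilinear {z : Fin n → ℕ | ∃ x ∈ X, z + x ∈ Y} :=
  semilinear_iff_isSemilinearSet.2 <|
    (semilinear_iff_isSemilinearSet.1 hX).setOf_exists_add_mem
      (semilinear_iff_isSemilinearSet.1 hY)
end

section
/- If φ : M' → M is a morphism of commutative monoids, M' is finitely generated, and X is a rational (semi-linear) subset of M, then φ⁻¹(X) is a rational subset of M'. -/
open scoped Pointwise

/-- Rational subsets of a commutative monoid `M`: the smallest class containing the
empty set and singletons, closed under finite union, pointwise product of sets, and
the star operation `X ↦ X*` (the submonoid generated by `X`). -/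
inductive IsRational {M : Type*} [CommMonoid M] : Set M → Prop
  | empty : IsRational (∅ : Set M)
  | singleton (m : M) : IsRational {m}
  | union {X Y : Set M} : IsRational X → IsRational Y → IsRational (X ∪ Y)
  | mul {X Y : Set M} : IsRational X → IsRational Y → IsRational (X * Y)
  | star {X : Set M} : IsRational X → IsRational (Submonoid.closure X : Set M)

/-!
Read in `Additive M`, rational subsets of `M` are exactly the semilinear sets of Mathlib's
`IsSemilinearSet`: both classes contain the singletons and are closed under union, sum and
submonoid closure, and a linear set `a + ⟨t⟩` with `t` finite is the rational set `{a} * t*`.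
The theorem is then the closure of semilinear sets under preimages by homomorphisms out of
finitely generated monoids (`IsSemilinearSet.preimage`), which comes from the semilinearity of
the solution sets of equations `a + f x = b + g x`.
-/

section

variable {M : Type*} [CommMonoid M]

namespace IsRational

theorem biUnion {ι : Type*} {s : Set ι} {f : ι → Set M} (hs : s.Finite)
    (hf : ∀ i ∈ s, IsRational (f i)) : IsRational (⋃ i ∈ s, f i) := by
  induction s, hs using Set.Finite.induction_on with
  | empty => simpa using IsRational.empty
  | insert _ _ ih =>
    simp_rw [Set.mem_insert_iff, forall_eq_or_imp] at hf
    simpa using hf.1.union (ih hf.2)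

theorem of_finite {S : Set M} (hS : S.Finite) : IsRational S := by
  simpa using biUnion hS fun m _ => singleton m

theorem isSemilinearSet {X : Set M} (hX : IsRational X) :
    IsSemilinearSet (Additive.toMul ⁻¹' X) := by
  induction hX with
  | empty => exact .empty
  | singleton m => exact .singleton (Additive.ofMul m)
  | union _ _ ihX ihY => exact ihX.union ihY
  | mul _ _ ihX ihY => exact ihX.add ihY
  | star _ ih =>
    rw [← Submonoid.coe_toAddSubmonoid_apply, Submonoid.toAddSubmonoid_closure]
    exact ih.closure

end IsRational

theorem IsLinearSet.isRational {S : Set (Additive M)} (hS : IsLinearSet S) :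
    IsRational (Additive.ofMul ⁻¹' S) := by
  obtain ⟨a, t, ht, rfl⟩ := hS
  have hclosure : (Submonoid.closure (Additive.ofMul ⁻¹' t) : Set M) =
      Additive.ofMul ⁻¹' (AddSubmonoid.closure t) := by
    rw [← AddSubmonoid.toSubmonoid'_closure]
    rfl
  have hcoset : Additive.ofMul ⁻¹' (a +ᵥ (AddSubmonoid.closure t : Set (Additive M))) =
      {a.toMul} * (Submonoid.closure (Additive.ofMul ⁻¹' t) : Set M) := by
    ext x
    simp only [hclosure, Set.mem_preimage, Set.mem_vadd_set, Set.mem_mul,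
      Set.mem_singleton_iff, exists_eq_left]
    rfl
  rw [hcoset]
  exact .mul (.singleton _) (.star (.of_finite (ht.preimage Additive.ofMul.injective.injOn)))

theorem IsSemilinearSet.isRational {S : Set (Additive M)} (hS : IsSemilinearSet S) :
    IsRational (Additive.ofMul ⁻¹' S) := by
  obtain ⟨𝒮, h𝒮, hlinear, rfl⟩ := hS
  rw [Set.preimage_sUnion]
  exact .biUnion h𝒮 fun L hL => (hlinear L hL).isRational

theorem isRational_iff_isSemilinearSet {X : Set M} :
    IsRational X ↔ IsSemilinearSet (Additive.toMul ⁻¹' X) :=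
  ⟨IsRational.isSemilinearSet, IsSemilinearSet.isRational⟩

end

/-- If `φ : M' → M` is a morphism of commutative monoids, `M'` is finitely generated,
and `X` is a rational subset of `M`, then `φ⁻¹(X)` is a rational subset of `M'`. -/
theorem rational_preimage_of_fg {M' M : Type*} [CommMonoid M'] [CommMonoid M]
    (hfg : Monoid.FG M') (φ : M' →* M) (X : Set M) (hX : IsRational X) :
    IsRational (φ ⁻¹' X) := by
  rw [isRational_iff_isSemilinearSet] at hX ⊢
  exact hX.preimage φ.toAdditive
end
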